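/- Let S be a real symmetric 3×3 matrix with trace(S) = 0 and eigenvalues λ₁, λ₂, λ₃ (with multiplicity). Then (trace(S²))³ = 6·(trace(S³))² holds if and only if at least two of the eigenvalues λ₁, λ₂, λ₃ coincide. -/

import Mathlib

/-!
For a traceless `S` the power sums `p₂ = tr S²`, `p₃ = tr S³` of its eigenvalues satisfy
`p₂³ - 6 p₃² = 2 ((λ₁ - λ₂)(λ₂ - λ₃)(λ₃ - λ₁))²`, twice the discriminant of the characteristic
polynomial, which vanishes exactly when two eigenvalues coincide. The spectral theorem is what
identifies `tr Sᵏ` with the power sums of the roots of the characteristic polynomial.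
-/

open Polynomial

theorem Matrix.IsHermitian.trace_pow_eq_sum_eigenvalues_pow {𝕜 n : Type*} [RCLike 𝕜]
    [Fintype n] [DecidableEq n] {A : Matrix n n 𝕜} (hA : A.IsHermitian) (k : ℕ) :
    (A ^ k).trace = ∑ i, (hA.eigenvalues i : 𝕜) ^ k := by
  conv_lhs => rw [hA.spectral_theorem, ← map_pow, Unitary.conjStarAlgAut_apply,
    trace_mul_cycle, Unitary.coe_star_mul_self, one_mul, diagonal_pow, trace_diagonal]
  simp

theorem Polynomial.map_univ_eq_of_prod_X_sub_C_eq {R ι : Type*} [CommRing R] [IsDomain R]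
    [Fintype ι] {a b : ι → R} (h : ∏ i, (X - C (a i)) = ∏ i, (X - C (b i))) :
    Finset.univ.val.map a = Finset.univ.val.map b := by
  have hroots (c : ι → R) : (∏ i, (X - C (c i))).roots = Finset.univ.val.map c := by
    rw [← roots_multiset_prod_X_sub_C (Finset.univ.val.map c), Multiset.map_map]
    rfl
  rw [← hroots a, ← hroots b, h]

theorem Finset.sum_comp_eq_of_map_univ_eq {ι α M : Type*} [Fintype ι] [AddCommMonoid M]
    {a b : ι → α} (h : Finset.univ.val.map a = Finset.univ.val.map b) (f : α → M) :
    ∑ i, f (a i) = ∑ i, f (b i) := by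
  have hf := congrArg (fun s => (s.map f).sum) h
  simp only [Multiset.map_map] at hf
  exact hf

theorem sum_sq_cube_sub_six_mul_sum_cube_sq {a b c : ℝ} (h : a + b + c = 0) :
    (a ^ 2 + b ^ 2 + c ^ 2) ^ 3 - 6 * (a ^ 3 + b ^ 3 + c ^ 3) ^ 2
      = 2 * ((a - b) * (b - c) * (c - a)) ^ 2 := by
  obtain rfl : c = -a - b := by linarith
  ring

theorem sum_sq_cube_eq_six_mul_sum_cube_sq_iff {a b c : ℝ} (h : a + b + c = 0) :
    (a ^ 2 + b ^ 2 + c ^ 2) ^ 3 = 6 * (a ^ 3 + b ^ 3 + c ^ 3) ^ 2 ↔ a = b ∨ b = c ∨ c = a := by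
  rw [← sub_eq_zero, sum_sq_cube_sub_six_mul_sum_cube_sq h]
  simp only [mul_eq_zero, two_ne_zero, false_or, pow_eq_zero_iff two_ne_zero, sub_eq_zero, or_assoc]

theorem Fin.exists_ne_apply_eq_iff_three {α : Type*} (f : Fin 3 → α) :
    (∃ i j, i ≠ j ∧ f i = f j) ↔ f 0 = f 1 ∨ f 1 = f 2 ∨ f 2 = f 0 := by
  constructor
  · rintro ⟨i, j, hij, hf⟩
    fin_cases i <;> fin_cases j <;> simp_all [eq_comm]
  · rintro (hf | hf | hf)
    exacts [⟨0, 1, by decide, hf⟩, ⟨1, 2, by decide, hf⟩, ⟨2, 0, by decide, hf⟩]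

/-- For a real symmetric traceless 3×3 matrix `S` with eigenvalues `λ 0, λ 1, λ 2`
(with multiplicity, i.e. the characteristic polynomial factors as `∏ (X - λ i)`),
the identity `(trace S²)³ = 6·(trace S³)²` holds iff two eigenvalues coincide. -/
theorem segre_degeneracy_criterion (S : Matrix (Fin 3) (Fin 3) ℝ) (lam : Fin 3 → ℝ)
    (hsymm : S.IsSymm) (htr : Matrix.trace S = 0)
    (heig : S.charpoly = ∏ i : Fin 3, (X - C (lam i))) :
    (Matrix.trace (S ^ 2)) ^ 3 = 6 * (Matrix.trace (S ^ 3)) ^ 2 ↔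
      ∃ i j : Fin 3, i ≠ j ∧ lam i = lam j := by
  have hS : S.IsHermitian := Matrix.isHermitian_iff_isSymm.mpr hsymm
  have hspec : Finset.univ.val.map lam = Finset.univ.val.map hS.eigenvalues :=
    map_univ_eq_of_prod_X_sub_C_eq (by simpa [← heig] using hS.charpoly_eq)
  have htrace (k : ℕ) : (S ^ k).trace = ∑ i, lam i ^ k := by
    rw [Finset.sum_comp_eq_of_map_univ_eq hspec (· ^ k)]
    simpa using hS.trace_pow_eq_sum_eigenvalues_pow k
  have hsum : lam 0 + lam 1 + lam 2 = 0 := by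
    simpa [Fin.sum_univ_three, htr] using (htrace 1).symm
  rw [htrace, htrace, Fin.sum_univ_three, Fin.sum_univ_three,
    sum_sq_cube_eq_six_mul_sum_cube_sq_iff hsum, Fin.exists_ne_apply_eq_iff_three]
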